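/- Let m be a Borel measure on ℝⁿ, finite on compact sets, satisfying ∫ e^{−β|x|} dm(x) < +∞ for some β > 0. For any φ ∈ F(ℝⁿ), it holds that log ∫ e^{−φ} dm = sup_{ν ∈ P₁(ℝⁿ)} {∫ (−φ) dν − H(ν|m)}, and the supremum can be restricted to compactly supported ν. Moreover, if φ and m are symmetric (resp. unconditional), the supremum can be restricted to compactly supported symmetric (resp. unconditional) elements of P₁(ℝⁿ). -/

import Mathlib

open MeasureTheory Real Filter Set
attribute [local instance] Classical.propDecidable
open scoped ENNReal NNReal Topology

noncomputable section

/-- `ℝⁿ` as a Euclidean space. -/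
abbrev En (n : ℕ) : Type := EuclideanSpace ℝ (Fin n)

/-- `exp(-t)` for an extended real `t`, valued in `ℝ≥0∞`. -/
def expNeg (t : EReal) : ℝ≥0∞ :=
  if t = ⊥ then ⊤ else if t = ⊤ then 0 else ENNReal.ofReal (Real.exp (-t.toReal))

/-- Convexity for `EReal`-valued functions on `ℝⁿ`. -/
def ConvexE {n : ℕ} (f : En n → EReal) : Prop :=
  ∀ x y : En n, ∀ t : ℝ, 0 ≤ t → t ≤ 1 →
    f (t • x + (1 - t) • y) ≤ (t : EReal) * f x + ((1 - t : ℝ) : EReal) * f y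

/-- The class `F(ℝⁿ)`: proper lower semicontinuous convex functions `ℝⁿ → ℝ ∪ {+∞}`. -/
def IsF {n : ℕ} (f : En n → EReal) : Prop :=
  LowerSemicontinuous f ∧ ConvexE f ∧ (∃ x, f x ≠ ⊤) ∧ (∀ x, f x ≠ ⊥)

/-- Fenchel–Legendre transform. -/
def legendre {n : ℕ} (f : En n → EReal) : En n → EReal :=
  fun y => ⨆ x : En n, ((inner ℝ x y : ℝ) : EReal) - f x

/-- `∫ e^{-f} dm`, valued in `ℝ≥0∞`. -/
def intExpNeg {n : ℕ} (m : Measure (En n)) (f : En n → EReal) : ℝ≥0∞ :=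
  ∫⁻ x, expNeg (f x) ∂m

/-- Extended-real logarithm of an `ℝ≥0∞` number. -/
def elog (x : ℝ≥0∞) : EReal :=
  if x = 0 then ⊥ else if x = ⊤ then ⊤ else ((Real.log x.toReal : ℝ) : EReal)

/-- Positive part of an extended real, as an element of `ℝ≥0∞`. -/
def posPart (x : EReal) : ℝ≥0∞ := if x = ⊤ then ⊤ else ENNReal.ofReal x.toReal

/-- Extended-valued integral `∫ f dμ := ∫ f⁺ dμ - ∫ f⁻ dμ`. -/
def eInt {n : ℕ} (μ : Measure (En n)) (f : En n → EReal) : EReal :=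
  ((∫⁻ x, posPart (f x) ∂μ : ℝ≥0∞) : EReal) - ((∫⁻ x, posPart (-f x) ∂μ : ℝ≥0∞) : EReal)

/-- Probability measures with finite first moment. -/
def MemP1 {n : ℕ} (ν : Measure (En n)) : Prop :=
  IsProbabilityMeasure ν ∧ ∫⁻ x, (‖x‖₊ : ℝ≥0∞) ∂ν ≠ ⊤

/-- Probability measures with finite second moment. -/
def MemP2 {n : ℕ} (ν : Measure (En n)) : Prop :=
  IsProbabilityMeasure ν ∧ ∫⁻ x, (‖x‖₊ : ℝ≥0∞) ^ 2 ∂ν ≠ ⊤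

/-- A measure is compactly supported. -/
def HasCompactSupportMeasure {n : ℕ} (ν : Measure (En n)) : Prop :=
  ∃ K : Set (En n), IsCompact K ∧ ν Kᶜ = 0

/-- Coordinate sign flip of a point of `ℝⁿ`. -/
def signFlip {n : ℕ} (ε : Fin n → Bool) (x : En n) : En n :=
  (EuclideanSpace.equiv (Fin n) ℝ).symm (fun i => if ε i then x i else -x i)

/-- Unconditional function. -/
def UncondFun {n : ℕ} (f : En n → EReal) : Prop := ∀ ε x, f (signFlip ε x) = f x

/-- Symmetric function. -/
def SymmFun {n : ℕ} (f : En n → EReal) : Prop := ∀ x, f (-x) = f x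

/-- Unconditional measure. -/
def UncondMeas {n : ℕ} (ν : Measure (En n)) : Prop := ∀ ε, Measure.map (signFlip ε) ν = ν

/-- Symmetric measure. -/
def SymmMeas {n : ℕ} (ν : Measure (En n)) : Prop := Measure.map (fun x => -x) ν = ν

/-- The functional `K(ν|m) = sup { ∫(-f) dν + log ∫ e^{-f*} dm : f ∈ L¹(ν) ∩ F(ℝⁿ) }`. -/
def Kfun {n : ℕ} (ν m : Measure (En n)) : EReal :=
  ⨆ (f : En n → EReal) (_ : IsF f ∧ (∀ᵐ x ∂ν, f x ≠ ⊤) ∧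
      Integrable (fun x => (f x).toReal) ν),
    ((-(∫ x, (f x).toReal ∂ν) : ℝ) : EReal) + elog (intExpNeg m (legendre f))

/-- Maximal correlation transport cost `T(ν₁, ν₂)`. -/
def Tcost {n : ℕ} (ν₁ ν₂ : Measure (En n)) : EReal :=
  ⨅ (f : En n → EReal) (_ : IsF f), eInt ν₁ f + eInt ν₂ (legendre f)

/-- Relative entropy `H(η|m)`, equal to `+∞` when `η` is not absolutely continuous w.r.t. `m`. -/
def relEnt {n : ℕ} (η m : Measure (En n)) : EReal :=
  if η ≪ m then eInt η (fun x => ((Real.log (η.rnDeriv m x).toReal : ℝ) : EReal)) else ⊤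

/-- The standard Gaussian measure on `ℝⁿ`. -/
def stdGaussian (n : ℕ) : Measure (En n) :=
  volume.withDensity fun x =>
    ENNReal.ofReal ((2 * Real.pi) ^ (-(n : ℝ) / 2) * Real.exp (-‖x‖ ^ 2 / 2))

/-- Squared `2`-Wasserstein distance. -/
def W2sq {n : ℕ} (μ ν : Measure (En n)) : ℝ≥0∞ :=
  ⨅ (p : Measure (En n × En n)) (_ : p.map Prod.fst = μ ∧ p.map Prod.snd = ν),
    ∫⁻ q, (‖q.1 - q.2‖₊ : ℝ≥0∞) ^ 2 ∂p

/-- Absolute continuity of `g : ℝ → ℝ` on `[a, b]` (FTC characterization). -/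
def ACOn (g : ℝ → ℝ) (a b : ℝ) : Prop :=
  IntegrableOn (deriv g) (Set.Icc a b) ∧
    ∀ x ∈ Set.Icc a b, g x - g a = ∫ t in a..x, deriv g t

/-- The point of `ℝⁿ` obtained by replacing the `i`-th coordinate of `x` by `t`. -/
def updCoord {n : ℕ} (x : En n) (i : Fin n) (t : ℝ) : En n :=
  (EuclideanSpace.equiv (Fin n) ℝ).symm
    (Function.update ((EuclideanSpace.equiv (Fin n) ℝ) x) i t)

/-- Absolute continuity on almost every line parallel to a coordinate axis. -/
def ACL {n : ℕ} (g : En n → ℝ) : Prop :=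
  ∀ i : Fin n, ∀ᵐ x ∂(volume : Measure (En n)),
    ∀ a b : ℝ, ACOn (fun t => g (updCoord x i t)) a b

/-- Squared norm of the coordinate-wise a.e. gradient, via line derivatives. -/
def gradSq {n : ℕ} (g : En n → ℝ) (x : En n) : ℝ :=
  ∑ i : Fin n, (lineDeriv ℝ g x (EuclideanSpace.single i 1)) ^ 2

/-- Relative Fisher information `I(η|γ) = 4 ∫ |∇ √h|² dγ` where `h = dη/dγ`;
`+∞` unless `√h` is absolutely continuous on almost every line parallel to an axis. -/
def fisherInfo {n : ℕ} (η γ : Measure (En n)) : ℝ≥0∞ :=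
  if η ≪ γ ∧ ACL (fun x => Real.sqrt (η.rnDeriv γ x).toReal) then
    4 * ∫⁻ x, ENNReal.ofReal (gradSq (fun y => Real.sqrt (η.rnDeriv γ y).toReal) x) ∂γ
  else ⊤

/-- Deficit in the Gaussian logarithmic Sobolev inequality. -/
def lsDeficit {n : ℕ} (η : Measure (En n)) : EReal :=
  ((1 / 2 : ℝ) : EReal) * ((fisherInfo η (stdGaussian n) : ℝ≥0∞) : EReal)
    - relEnt η (stdGaussian n)

/-- Moment measure `∇V_# η` of a log-concave measure `η = e^{-V} dx`. -/
def momentMeasure {n : ℕ} (V : En n → EReal) (η : Measure (En n)) : Measure (En n) :=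
  Measure.map (fun x => gradient (fun y => (V y).toReal) x) η

/-- Essential continuity of a convex function. -/
def EssCont {n : ℕ} (V : En n → EReal) : Prop :=
  μH[(n : ℝ) - 1] {x : En n | x ∈ frontier {y | V y ≠ ⊤} ∧ V x ≠ ⊤} = 0

/-- The functional inverse Santaló inequality with constant `c`, restricted to a class `P`. -/
def InvSantaloOn {n : ℕ} (c : ℝ) (P : (En n → EReal) → Prop) : Prop :=
  ∀ f : En n → EReal, IsF f → P f →
    0 < intExpNeg volume f → 0 < intExpNeg volume (legendre f) →
    ENNReal.ofReal c ^ n ≤ intExpNeg volume f * intExpNeg volume (legendre f)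

/-- The functional inverse Santaló inequality `IS_n(c)`. -/
def InvSantalo (n : ℕ) (c : ℝ) : Prop := InvSantaloOn (n := n) c fun _ => True

/-- The symmetric functional inverse Santaló inequality `IS_{n,s}(c)`. -/
def InvSantaloSymm (n : ℕ) (c : ℝ) : Prop := InvSantaloOn (n := n) c SymmFun

/-- The unconditional functional inverse Santaló inequality `IS_{n,u}(c)`. -/
def InvSantaloUncond (n : ℕ) (c : ℝ) : Prop := InvSantaloOn (n := n) c UncondFun

/-!
The inequality `≤` is the Gibbs variational principle: if `ν ≪ m` has density `h`, Jensen's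
inequality gives `∫ (-φ) dν - H(ν|m) = ∫ log (e^{-φ}/h) dν ≤ log ∫ e^{-φ}/h dν ≤ log ∫ e^{-φ} dm`.
The assumption `∫ e^{-β|x|} dm < ∞`, together with the first moment of `ν`, is what makes
`(log h)⁻` integrable, so that `H(ν|m)` is never of the form `∞ - ∞`.

For `≥`, equality holds for the Gibbs measures `e^{-φ} m` conditioned on the sets
`{|x| ≤ R, |φ| ≤ R}`, whose masses increase to `∫ e^{-φ} dm`; these are compactly supported and
inherit every symmetry shared by `φ`, `m` and the norm.
-/

open ProbabilityTheory

section ExtendedIntegral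

variable {n : ℕ} {μ : Measure (En n)}

lemma posPart_coe (r : ℝ) : _root_.posPart (r : EReal) = ENNReal.ofReal r := by
  simp [_root_.posPart]

lemma monotone_posPart : Monotone _root_.posPart := by
  intro x y hxy
  induction y using EReal.rec with
  | top => simp [_root_.posPart]
  | bot => simp [le_bot_iff.mp hxy, _root_.posPart]
  | coe y =>
    induction x using EReal.rec with
    | top => simp at hxy
    | bot => simp [_root_.posPart]
    | coe x => simpa [posPart_coe] using ENNReal.ofReal_le_ofReal (EReal.coe_le_coe_iff.mp hxy)

lemma eInt_congr_ae {f g : En n → EReal} (h : f =ᵐ[μ] g) : eInt μ f = eInt μ g := by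
  have hpos : ∫⁻ x, _root_.posPart (f x) ∂μ = ∫⁻ x, _root_.posPart (g x) ∂μ :=
    lintegral_congr_ae (h.mono fun x hx => by simp only [hx])
  have hneg : ∫⁻ x, _root_.posPart (-f x) ∂μ = ∫⁻ x, _root_.posPart (-g x) ∂μ :=
    lintegral_congr_ae (h.mono fun x hx => by simp only [hx])
  rw [eInt, eInt, hpos, hneg]

lemma eInt_mono_ae {f g : En n → EReal} (h : f ≤ᵐ[μ] g) : eInt μ f ≤ eInt μ g :=
  EReal.sub_le_sub
    (EReal.coe_ennreal_le_coe_ennreal_iff.mpr <|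
      lintegral_mono_ae (h.mono fun _ hx => monotone_posPart hx))
    (EReal.coe_ennreal_le_coe_ennreal_iff.mpr <|
      lintegral_mono_ae (h.mono fun _ hx => monotone_posPart (EReal.neg_le_neg_iff.mpr hx)))

lemma eInt_eq_bot_of_lintegral_posPart_neg_eq_top {f : En n → EReal}
    (h : ∫⁻ x, _root_.posPart (-f x) ∂μ = ⊤) : eInt μ f = ⊥ := by
  rw [eInt, h, EReal.coe_ennreal_top, EReal.sub_top]

lemma eInt_coe_eq_sub (g : En n → ℝ) :
    eInt μ (fun x => (g x : EReal)) =
      ((∫⁻ x, ENNReal.ofReal (g x) ∂μ : ℝ≥0∞) : EReal) - (∫⁻ x, ENNReal.ofReal (-g x) ∂μ) := by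
  simp only [eInt, ← EReal.coe_neg, posPart_coe]

lemma eInt_coe {g : En n → ℝ} (hg : Integrable g μ) :
    eInt μ (fun x => (g x : EReal)) = ((∫ x, g x ∂μ : ℝ) : EReal) := by
  have hneg : ∫⁻ x, ENNReal.ofReal (-g x) ∂μ ≠ ⊤ := hg.neg.lintegral_lt_top.ne
  rw [eInt_coe_eq_sub, integral_eq_lintegral_pos_part_sub_lintegral_neg_part hg, EReal.coe_sub,
    EReal.coe_ennreal_toReal hg.lintegral_lt_top.ne, EReal.coe_ennreal_toReal hneg]

lemma integrable_of_lintegral_ofReal_ne_top {g : En n → ℝ} (hg : AEStronglyMeasurable g μ)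
    (hpos : ∫⁻ x, ENNReal.ofReal (g x) ∂μ ≠ ⊤) (hneg : ∫⁻ x, ENNReal.ofReal (-g x) ∂μ ≠ ⊤) :
    Integrable g μ := by
  have integrable_max {f : En n → ℝ} (hf : AEStronglyMeasurable f μ)
      (hf' : ∫⁻ x, ENNReal.ofReal (f x) ∂μ ≠ ⊤) : Integrable (fun x => max (f x) 0) μ :=
    (lintegral_ofReal_ne_top_iff_integrable (f := fun x => max (f x) 0)
      (hf.sup aestronglyMeasurable_const) (ae_of_all _ fun _ => le_max_right _ _)).mp (by
        simpa [ENNReal.ofReal_max] using hf')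
  exact ((integrable_max hg hpos).sub (integrable_max hg.neg hneg)).congr
    (ae_of_all _ fun x => max_zero_sub_max_neg_zero_eq_self (g x))

lemma eInt_add_integrable_le {g B : En n → ℝ} (hg : AEStronglyMeasurable g μ)
    (hB : Integrable B μ) :
    eInt μ (fun x => ((g x + B x : ℝ) : EReal)) ≤
      eInt μ (fun x => (g x : EReal)) + ((∫ x, B x ∂μ : ℝ) : EReal) := by
  by_cases hneg : ∫⁻ x, ENNReal.ofReal (-g x) ∂μ = ⊤
  · have hsum_neg : ∫⁻ x, ENNReal.ofReal (-(g x + B x)) ∂μ = ⊤ := by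
      have hle : ∫⁻ x, ENNReal.ofReal (-g x) ∂μ ≤
          ∫⁻ x, ENNReal.ofReal (-(g x + B x)) ∂μ + ∫⁻ x, ENNReal.ofReal (B x) ∂μ := by
        rw [← lintegral_add_right' _ hB.aemeasurable.ennreal_ofReal]
        refine lintegral_mono fun x => le_of_eq_of_le ?_ ENNReal.ofReal_add_le
        ring_nf
      rw [hneg, top_le_iff, ENNReal.add_eq_top] at hle
      exact hle.resolve_right hB.lintegral_lt_top.ne
    rw [eInt_coe_eq_sub, hsum_neg, EReal.coe_ennreal_top, EReal.sub_top]
    exact bot_le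
  by_cases hpos : ∫⁻ x, ENNReal.ofReal (g x) ∂μ = ⊤
  · rw [eInt_coe_eq_sub g, hpos, EReal.coe_ennreal_top, ← EReal.coe_ennreal_toReal hneg,
      EReal.top_sub_coe, EReal.top_add_coe]
    exact le_top
  have hg_int := integrable_of_lintegral_ofReal_ne_top hg hpos hneg
  rw [eInt_coe (g := fun x => g x + B x) (hg_int.add hB), eInt_coe hg_int,
    integral_add hg_int hB, EReal.coe_add]

end ExtendedIntegral

section Log

variable {n : ℕ}

lemma elog_eq_log : elog = ENNReal.log := by
  funext x
  simp only [elog, ENNReal.log]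
  congr

lemma expNeg_eq_exp_neg (t : EReal) : expNeg t = EReal.exp (-t) := by
  induction t using EReal.rec <;> simp [expNeg, ← EReal.coe_neg]

lemma measurable_expNeg : Measurable expNeg := by
  rw [funext expNeg_eq_exp_neg]
  exact EReal.measurable_exp.comp measurable_neg

lemma log_le_toReal_div_add_log_sub_one {c : ℝ} (hc : 0 < c) {w : ℝ≥0∞} (hw : w ≠ ⊤) :
    ENNReal.log w ≤ ((w.toReal / c + (Real.log c - 1) : ℝ) : EReal) := by
  rcases eq_zero_or_pos w with rfl | hw0
  · simp
  have hy : 0 < w.toReal := ENNReal.toReal_pos hw0.ne' hw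
  have := Real.log_le_sub_one_of_pos (div_pos hy hc)
  rw [Real.log_div hy.ne' hc.ne'] at this
  rw [ENNReal.log_pos_real hw0.ne' hw, EReal.coe_le_coe_iff]
  linarith

lemma eInt_log_le_log_lintegral {ν : Measure (En n)} [IsProbabilityMeasure ν]
    {w : En n → ℝ≥0∞} (hw : Measurable w) :
    eInt ν (fun x => ENNReal.log (w x)) ≤ ENNReal.log (∫⁻ x, w x ∂ν) := by
  set I := ∫⁻ x, w x ∂ν
  rcases eq_top_or_lt_top I with hI | hI
  · simp [hI]
  rcases eq_zero_or_pos I with hI0 | hI0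
  · have hw0 : w =ᵐ[ν] 0 := (lintegral_eq_zero_iff hw).mp hI0
    refine (eInt_eq_bot_of_lintegral_posPart_neg_eq_top ?_).trans_le bot_le
    have hpos : ∀ᵐ x ∂ν, _root_.posPart (-ENNReal.log (w x)) = ⊤ :=
      hw0.mono fun x hx => by simp [hx, _root_.posPart]
    simp [lintegral_congr_ae hpos]
  -- Jensen through the tangent line of `log` at `I`
  have hc : 0 < I.toReal := ENNReal.toReal_pos hI0.ne' hI.ne
  have hw_fin : ∀ᵐ x ∂ν, w x < ⊤ := ae_lt_top hw hI.ne
  have hw_int := integrable_toReal_of_lintegral_ne_top hw.aemeasurable hI.ne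
  set G := fun x => (w x).toReal / I.toReal + (Real.log I.toReal - 1)
  have hG : Integrable G ν := (hw_int.div_const _).add (integrable_const _)
  calc eInt ν (fun x => ENNReal.log (w x))
      ≤ eInt ν (fun x => (G x : EReal)) := eInt_mono_ae <|
        hw_fin.mono fun x hx => log_le_toReal_div_add_log_sub_one hc hx.ne
    _ = ENNReal.log I := by
        rw [eInt_coe hG, ENNReal.log_pos_real hI0.ne' hI.ne, EReal.coe_eq_coe_iff,
          integral_add (hw_int.div_const _) (integrable_const _), integral_div,
          integral_toReal hw.aemeasurable hw_fin, integral_const, probReal_univ, one_smul,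
          div_self hc.ne']
        ring

end Log

section RadonNikodym

variable {α : Type*} [MeasurableSpace α] {ν m : Measure α}

lemma mul_ofReal_neg_log_toReal_le_one (t : ℝ≥0∞) :
    t * ENNReal.ofReal (-Real.log t.toReal) ≤ 1 := by
  rcases eq_top_or_lt_top t with rfl | ht
  · simp
  rw [← ENNReal.ofReal_toReal ht.ne, ENNReal.toReal_ofReal ENNReal.toReal_nonneg,
    ← ENNReal.ofReal_mul ENNReal.toReal_nonneg, ← ENNReal.ofReal_one]
  refine ENNReal.ofReal_le_ofReal ?_
  have := Real.negMulLog_le_one_sub_self (x := t.toReal) ENNReal.toReal_nonneg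
  rw [Real.negMulLog, neg_mul, ← mul_neg] at this
  linarith [ENNReal.toReal_nonneg (a := t)]

lemma lintegral_ofReal_neg_log_rnDeriv_le [SigmaFinite ν] [SigmaFinite m] (hac : ν ≪ m)
    {V : α → ℝ} (hV : Measurable V) :
    ∫⁻ x, ENNReal.ofReal (-Real.log (ν.rnDeriv m x).toReal) ∂ν ≤
      ∫⁻ x, ENNReal.ofReal (V x) ∂ν + ∫⁻ x, ENNReal.ofReal (Real.exp (-V x)) ∂m := by
  -- `k` is the density of `ν` with respect to `e^{-V} m`, and `t (log t)⁻ ≤ 1`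
  set k : α → ℝ≥0∞ := fun x => ν.rnDeriv m x * ENNReal.ofReal (Real.exp (V x))
  have hk : Measurable k := (Measure.measurable_rnDeriv ν m).mul (by fun_prop)
  have hh : ∀ x, ν.rnDeriv m x = ENNReal.ofReal (Real.exp (-V x)) * k x := fun x => by
    rw [mul_left_comm, ← ENNReal.ofReal_mul (Real.exp_pos _).le, ← Real.exp_add,
      neg_add_cancel, Real.exp_zero, ENNReal.ofReal_one, mul_one]
  have hsplit : ∀ᵐ x ∂ν, ENNReal.ofReal (-Real.log (ν.rnDeriv m x).toReal) ≤
      ENNReal.ofReal (-Real.log (k x).toReal) + ENNReal.ofReal (V x) := by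
    filter_upwards [Measure.rnDeriv_pos hac, hac.ae_le (Measure.rnDeriv_lt_top ν m)]
      with x h0 htop
    refine le_of_eq_of_le ?_ ENNReal.ofReal_add_le
    rw [ENNReal.toReal_mul, ENNReal.toReal_ofReal (Real.exp_pos _).le,
      Real.log_mul (ENNReal.toReal_pos h0.ne' htop.ne).ne' (Real.exp_pos _).ne', Real.log_exp]
    ring_nf
  have hk_log : ∫⁻ x, ENNReal.ofReal (-Real.log (k x).toReal) ∂ν ≤
      ∫⁻ x, ENNReal.ofReal (Real.exp (-V x)) ∂m := by
    rw [← lintegral_rnDeriv_mul hac (by fun_prop)]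
    refine lintegral_mono fun x => ?_
    rw [hh x, mul_assoc]
    exact mul_le_of_le_one_right zero_le (mul_ofReal_neg_log_toReal_le_one (k x))
  calc ∫⁻ x, ENNReal.ofReal (-Real.log (ν.rnDeriv m x).toReal) ∂ν
      ≤ ∫⁻ x, ENNReal.ofReal (-Real.log (k x).toReal) + ENNReal.ofReal (V x) ∂ν :=
        lintegral_mono_ae hsplit
    _ ≤ _ := by
        rw [lintegral_add_right _ (by fun_prop), add_comm]
        gcongr

lemma lintegral_mul_inv_rnDeriv_le [ν.HaveLebesgueDecomposition m] (hac : ν ≪ m)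
    {f : α → ℝ≥0∞} (hf : AEMeasurable f m) :
    ∫⁻ x, f x * (ν.rnDeriv m x)⁻¹ ∂ν ≤ ∫⁻ x, f x ∂m := by
  rw [← lintegral_rnDeriv_mul hac (f := fun x => f x * (ν.rnDeriv m x)⁻¹)
    (hf.mul (Measure.measurable_rnDeriv ν m).inv.aemeasurable)]
  refine lintegral_mono fun x => ?_
  calc ν.rnDeriv m x * (f x * (ν.rnDeriv m x)⁻¹)
      = f x * (ν.rnDeriv m x * (ν.rnDeriv m x)⁻¹) := by ring
    _ ≤ f x := mul_le_of_le_one_right zero_le (ENNReal.mul_inv_le_one _)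

end RadonNikodym

section RelativeEntropy

variable {n : ℕ} {ν m : Measure (En n)}

lemma relEnt_eq_eInt_log [SigmaFinite ν] [SigmaFinite m] (hac : ν ≪ m) :
    relEnt ν m = eInt ν fun x => ENNReal.log (ν.rnDeriv m x) := by
  refine (if_pos hac).trans (eInt_congr_ae ?_)
  filter_upwards [Measure.rnDeriv_pos hac, hac.ae_le (Measure.rnDeriv_lt_top ν m)] with x h0 htop
  exact (ENNReal.log_pos_real h0.ne' htop.ne).symm

lemma relEnt_eq_integral [SigmaFinite m]
    (hm : ∃ β : ℝ, 0 < β ∧ ∫⁻ x, ENNReal.ofReal (Real.exp (-β * ‖x‖)) ∂m ≠ ⊤)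
    (hν : MemP1 ν) (hH : relEnt ν m ≠ ⊤) :
    ν ≪ m ∧ Integrable (fun x => Real.log (ν.rnDeriv m x).toReal) ν ∧
      relEnt ν m = ((∫ x, Real.log (ν.rnDeriv m x).toReal ∂ν : ℝ) : EReal) := by
  obtain ⟨β, hβ, hm⟩ := hm
  have := hν.1
  have hac : ν ≪ m := by
    by_contra h
    exact hH (if_neg h)
  have hH_eq : relEnt ν m = eInt ν fun x => ((Real.log (ν.rnDeriv m x).toReal : ℝ) : EReal) :=
    if_pos hac
  have hneg : ∫⁻ x, ENNReal.ofReal (-Real.log (ν.rnDeriv m x).toReal) ∂ν ≠ ⊤ := by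
    have hmoment : ∫⁻ x, ENNReal.ofReal (β * ‖x‖) ∂ν ≠ ⊤ := by
      simp_rw [ENNReal.ofReal_mul hβ.le, ofReal_norm]
      rw [lintegral_const_mul _ (by fun_prop)]
      exact ENNReal.mul_ne_top ENNReal.ofReal_ne_top (by simpa [enorm_eq_nnnorm] using hν.2)
    refine ne_top_of_le_ne_top (ENNReal.add_ne_top.mpr ⟨hmoment, ?_⟩)
      (lintegral_ofReal_neg_log_rnDeriv_le hac (V := fun x => β * ‖x‖) (by fun_prop))
    simpa only [neg_mul] using hm
  have hpos : ∫⁻ x, ENNReal.ofReal (Real.log (ν.rnDeriv m x).toReal) ∂ν ≠ ⊤ := by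
    intro htop
    rw [hH_eq, eInt_coe_eq_sub, htop, EReal.coe_ennreal_top, ← EReal.coe_ennreal_toReal hneg,
      EReal.top_sub_coe] at hH
    exact hH rfl
  have hint := integrable_of_lintegral_ofReal_ne_top
    (Measure.measurable_rnDeriv ν m).ennreal_toReal.log.aestronglyMeasurable hpos hneg
  exact ⟨hac, hint, hH_eq.trans (eInt_coe hint)⟩

lemma eInt_neg_sub_relEnt_le_log_intExpNeg [SigmaFinite m]
    (hm : ∃ β : ℝ, 0 < β ∧ ∫⁻ x, ENNReal.ofReal (Real.exp (-β * ‖x‖)) ∂m ≠ ⊤)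
    {φ : En n → EReal} (hφ : Measurable φ) (hφ_bot : ∀ x, φ x ≠ ⊥) (hν : MemP1 ν) :
    eInt ν (fun x => -φ x) - relEnt ν m ≤ ENNReal.log (intExpNeg m φ) := by
  have := hν.1
  by_cases hH : relEnt ν m = ⊤
  · simp [hH]
  obtain ⟨hac, hB, hH_eq⟩ := relEnt_eq_integral hm hν hH
  by_cases hφ_top : ∫⁻ x, _root_.posPart (φ x) ∂ν = ⊤
  · rw [eInt_eq_bot_of_lintegral_posPart_neg_eq_top (by simpa using hφ_top), EReal.bot_sub]
    exact bot_le
  have hφ_fin : ∀ᵐ x ∂ν, φ x ≠ ⊤ :=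
    (ae_lt_top (monotone_posPart.measurable.comp hφ) hφ_top).mono fun x hx hx_top => by
      simp [hx_top, _root_.posPart] at hx
  set A := fun x => -(φ x).toReal
  set B := fun x => Real.log (ν.rnDeriv m x).toReal
  have hA : (fun x => -φ x) =ᵐ[ν] fun x => (A x : EReal) := hφ_fin.mono fun x hx => by
    simp [A, EReal.coe_toReal hx (hφ_bot x)]
  -- `w` is the density of `e^{-φ} m` with respect to `ν` on `{h > 0}`
  set w := fun x => expNeg (φ x) * (ν.rnDeriv m x)⁻¹
  have hw : (fun x => ((A x - B x : ℝ) : EReal)) =ᵐ[ν] fun x => ENNReal.log (w x) := by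
    filter_upwards [hφ_fin, Measure.rnDeriv_pos hac,
      hac.ae_le (Measure.rnDeriv_lt_top ν m)] with x hx h0 htop
    rw [ENNReal.log_mul_add, ENNReal.log_inv, expNeg_eq_exp_neg, EReal.log_exp,
      ENNReal.log_pos_real h0.ne' htop.ne, ← EReal.coe_toReal hx (hφ_bot x)]
    rfl
  have hAB_meas : Measurable fun x => A x - B x :=
    hφ.ereal_toReal.neg.sub (Measure.measurable_rnDeriv ν m).ennreal_toReal.log
  have hAB := eInt_add_integrable_le hAB_meas.aestronglyMeasurable hB
  simp only [sub_add_cancel] at hAB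
  calc eInt ν (fun x => -φ x) - relEnt ν m
      = eInt ν (fun x => (A x : EReal)) - ((∫ x, B x ∂ν : ℝ) : EReal) := by
        rw [eInt_congr_ae hA, hH_eq]
    _ ≤ eInt ν (fun x => ((A x - B x : ℝ) : EReal)) := by
        rwa [EReal.sub_le_iff_le_add (.inl (EReal.coe_ne_bot _)) (.inl (EReal.coe_ne_top _))]
    _ = eInt ν (fun x => ENNReal.log (w x)) := eInt_congr_ae hw
    _ ≤ ENNReal.log (∫⁻ x, w x ∂ν) :=
        eInt_log_le_log_lintegral ((measurable_expNeg.comp hφ).mul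
          (Measure.measurable_rnDeriv ν m).inv)
    _ ≤ ENNReal.log (intExpNeg m φ) := ENNReal.log_le_log <|
        lintegral_mul_inv_rnDeriv_le hac (measurable_expNeg.comp hφ).aemeasurable

end RelativeEntropy

section Invariance

variable {α : Type*} [MeasurableSpace α] {μ : Measure α} {e : α → α}

lemma map_withDensity_eq_self (he : Measurable e) (hμ : μ.map e = μ) {f : α → ℝ≥0∞}
    (hf : Measurable f) (hfe : ∀ x, f (e x) = f x) :
    (μ.withDensity f).map e = μ.withDensity f := by
  ext s hs
  rw [Measure.map_apply he hs, withDensity_apply _ (he hs), withDensity_apply _ hs]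
  calc ∫⁻ x in e ⁻¹' s, f x ∂μ = ∫⁻ x in e ⁻¹' s, f (e x) ∂μ := by simp only [hfe]
    _ = ∫⁻ x in s, f x ∂μ := by rw [← setLIntegral_map hs hf he, hμ]

lemma map_cond_eq_self (he : Measurable e) (hμ : μ.map e = μ) {s : Set α}
    (hs : MeasurableSet s) (hes : e ⁻¹' s = s) : (μ[|s]).map e = μ[|s] := by
  ext t ht
  have hpre : μ (s ∩ e ⁻¹' t) = μ (s ∩ t) := by
    conv_lhs => rw [← hes]
    rw [← preimage_inter, ← Measure.map_apply he (hs.inter ht), hμ]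
  rw [Measure.map_apply he ht, cond_apply hs, cond_apply hs, hpre]

end Invariance

section Gibbs

variable {n : ℕ}

def gibbsMeasure (m : Measure (En n)) (φ : En n → EReal) : Measure (En n) :=
  m.withDensity fun x => expNeg (φ x)

def cutoff (φ : En n → EReal) (R : ℕ) : Set (En n) :=
  {x | ‖x‖ ≤ R ∧ φ x ∈ Icc (-(R : EReal)) R}

variable {m : Measure (En n)} {φ : En n → EReal}

lemma measurableSet_cutoff (hφ : Measurable φ) (R : ℕ) : MeasurableSet (cutoff φ R) :=
  (measurableSet_le measurable_norm measurable_const).inter (hφ measurableSet_Icc)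

lemma monotone_cutoff : Monotone (cutoff φ) := by
  intro R S hRS x ⟨hx, hlo, hhi⟩
  have hRS' : (R : EReal) ≤ S := by exact_mod_cast hRS
  exact ⟨hx.trans (by exact_mod_cast hRS), (EReal.neg_le_neg_iff.mpr hRS').trans hlo,
    hhi.trans hRS'⟩

lemma iUnion_cutoff (hφ_bot : ∀ x, φ x ≠ ⊥) : ⋃ R, cutoff φ R = {x | φ x ≠ ⊤} := by
  ext x
  simp only [cutoff, mem_iUnion, mem_ofPred_eq, mem_Icc]
  refine ⟨fun ⟨R, _, _, hR⟩ => ne_top_of_le_ne_top (EReal.coe_ne_top _) hR, fun hx => ?_⟩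
  obtain ⟨R, hR⟩ := exists_nat_ge (max ‖x‖ |(φ x).toReal|)
  rw [max_le_iff, abs_le] at hR
  rw [← EReal.coe_toReal hx (hφ_bot x)]
  exact ⟨R, hR.1, by simpa using EReal.coe_le_coe_iff.mpr hR.2.1, by exact_mod_cast hR.2.2⟩

lemma iSup_gibbsMeasure_cutoff (hφ : Measurable φ) (hφ_bot : ∀ x, φ x ≠ ⊥) :
    ⨆ R : ℕ, gibbsMeasure m φ (cutoff φ R) = intExpNeg m φ := by
  have hsupp : (fun x => expNeg (φ x)).support ⊆ {x | φ x ≠ ⊤} := fun x hx hx_top =>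
    hx (by simp [show φ x = ⊤ by simpa using hx_top, expNeg])
  have hfin : MeasurableSet {x | φ x ≠ ⊤} := (hφ (measurableSet_singleton ⊤)).compl
  rw [← monotone_cutoff.measure_iUnion, iUnion_cutoff hφ_bot, gibbsMeasure,
    withDensity_apply _ hfin,
    setLIntegral_eq_of_support_subset hsupp, intExpNeg]

lemma gibbsMeasure_cutoff_ne_top [IsFiniteMeasureOnCompacts m] (hφ : Measurable φ) (R : ℕ) :
    gibbsMeasure m φ (cutoff φ R) ≠ ⊤ := by
  rw [gibbsMeasure, withDensity_apply _ (measurableSet_cutoff hφ R)]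
  refine ne_top_of_le_ne_top (b := ∫⁻ _ in cutoff φ R, EReal.exp R ∂m) ?_
    (setLIntegral_mono' (measurableSet_cutoff hφ R) fun x hx => ?_)
  · rw [setLIntegral_const]
    refine ENNReal.mul_ne_top (by simp [← EReal.coe_natCast]) (ne_top_of_le_ne_top
      (isCompact_closedBall (0 : En n) R).measure_lt_top.ne (measure_mono fun x hx => ?_))
    simpa using hx.1
  · rw [expNeg_eq_exp_neg, EReal.exp_le_exp_iff, EReal.neg_le]
    exact hx.2.1

lemma cond_gibbsMeasure_eq_withDensity (hφ : Measurable φ) {s : Set (En n)}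
    (hs : MeasurableSet s) :
    (gibbsMeasure m φ)[|s] = m.withDensity fun x =>
      (gibbsMeasure m φ s)⁻¹ * s.indicator (fun y => expNeg (φ y)) x := by
  rw [ProbabilityTheory.cond, gibbsMeasure, restrict_withDensity hs, ← withDensity_indicator hs,
    ← withDensity_smul (f := s.indicator fun x => expNeg (φ x)) _
      ((measurable_expNeg.comp hφ).indicator hs)]
  rfl

lemma coe_toReal_eq_and_abs_toReal_le {t : EReal} {C : ℝ} (ht : t ∈ Icc (-(C : EReal)) C) :
    ((t.toReal : ℝ) : EReal) = t ∧ |t.toReal| ≤ C := by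
  induction t using EReal.rec with
  | bot => simp [← EReal.coe_neg] at ht
  | top => simp at ht
  | coe r =>
    simp only [mem_Icc, ← EReal.coe_neg, EReal.coe_le_coe_iff] at ht
    exact ⟨rfl, abs_le.mpr ht⟩

lemma eInt_neg_sub_relEnt_cond_gibbsMeasure [SigmaFinite m] (hφ : Measurable φ)
    {s : Set (En n)} (hs : MeasurableSet s) {C : ℝ} (hφs : ∀ x ∈ s, φ x ∈ Icc (-(C : EReal)) C)
    (h0 : gibbsMeasure m φ s ≠ 0) (htop : gibbsMeasure m φ s ≠ ⊤) :
    eInt ((gibbsMeasure m φ)[|s]) (fun x => -φ x) - relEnt ((gibbsMeasure m φ)[|s]) m =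
      ENNReal.log (gibbsMeasure m φ s) := by
  set ν := (gibbsMeasure m φ)[|s]
  have : IsProbabilityMeasure ν := cond_isProbabilityMeasure_of_finite h0 htop
  have hν : ν = m.withDensity fun x =>
      (gibbsMeasure m φ s)⁻¹ * s.indicator (fun y => expNeg (φ y)) x :=
    cond_gibbsMeasure_eq_withDensity hφ hs
  have hac : ν ≪ m := hν ▸ withDensity_absolutelyContinuous _ _
  have hrn : ν.rnDeriv m =ᵐ[m] fun x =>
      (gibbsMeasure m φ s)⁻¹ * s.indicator (fun y => expNeg (φ y)) x := by
    rw [hν]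
    exact Measure.rnDeriv_withDensity m (((measurable_expNeg.comp hφ).indicator hs).const_mul _)
  set A := fun x => -(φ x).toReal
  have hA_eq : ∀ᵐ x ∂ν, x ∈ s ∧ -φ x = (A x : EReal) ∧ |A x| ≤ C := by
    filter_upwards [ae_cond_mem hs] with x hx
    obtain ⟨hφx, hC⟩ := coe_toReal_eq_and_abs_toReal_le (hφs x hx)
    exact ⟨hx, by simp [A, hφx], by simpa [A] using hC⟩
  have hA : Integrable A ν :=
    .of_bound hφ.ereal_toReal.neg.aestronglyMeasurable C (hA_eq.mono fun x hx => hx.2.2)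
  set L := Real.log (gibbsMeasure m φ s).toReal
  have hlog : ∀ᵐ x ∂ν, ENNReal.log (ν.rnDeriv m x) = ((A x - L : ℝ) : EReal) := by
    filter_upwards [hac.ae_le hrn, hA_eq] with x hrn_x ⟨hx, hAx, _⟩
    rw [hrn_x, ENNReal.log_mul_add, ENNReal.log_inv, indicator_of_mem hx, expNeg_eq_exp_neg,
      EReal.log_exp, hAx, ENNReal.log_pos_real h0 htop, ← EReal.coe_neg, ← EReal.coe_add]
    congr 1
    ring
  rw [relEnt_eq_eInt_log hac, eInt_congr_ae hlog, eInt_congr_ae (hA_eq.mono fun x hx => hx.2.1),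
    eInt_coe hA, eInt_coe (g := fun x => A x - L) (hA.sub (integrable_const L)),
    integral_sub hA (integrable_const L), integral_const, probReal_univ, one_smul,
    ← EReal.coe_sub, sub_sub_cancel, ENNReal.log_pos_real h0 htop]

lemma preimage_cutoff {e : En n → En n} (hnorm : ∀ x, ‖e x‖ = ‖x‖) (hφe : ∀ x, φ (e x) = φ x)
    (R : ℕ) : e ⁻¹' cutoff φ R = cutoff φ R := by
  ext x
  simp [cutoff, hnorm, hφe]

lemma map_cond_gibbsMeasure_cutoff (hφ : Measurable φ) {e : En n → En n} (he : Measurable e)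
    (hm : m.map e = m) (hnorm : ∀ x, ‖e x‖ = ‖x‖) (hφe : ∀ x, φ (e x) = φ x) (R : ℕ) :
    ((gibbsMeasure m φ)[|cutoff φ R]).map e = (gibbsMeasure m φ)[|cutoff φ R] :=
  map_cond_eq_self he (map_withDensity_eq_self he hm (measurable_expNeg.comp hφ) (by simp [hφe]))
    (measurableSet_cutoff hφ R) (preimage_cutoff hnorm hφe R)

end Gibbs

section Support

variable {n : ℕ} {ν : Measure (En n)} {R : ℝ}

lemma memP1_of_ae_norm_le [IsProbabilityMeasure ν] (h : ∀ᵐ x ∂ν, ‖x‖ ≤ R) : MemP1 ν := by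
  refine ⟨inferInstance, ne_top_of_le_ne_top (b := ∫⁻ _, ENNReal.ofReal R ∂ν) (by simp)
    (lintegral_mono_ae (h.mono fun x hx => ?_))⟩
  rw [← enorm_eq_nnnorm, ← ofReal_norm]
  exact ENNReal.ofReal_le_ofReal hx

lemma hasCompactSupportMeasure_of_ae_norm_le (h : ∀ᵐ x ∂ν, ‖x‖ ≤ R) :
    HasCompactSupportMeasure ν :=
  ⟨Metric.closedBall 0 R, isCompact_closedBall _ _,
    mem_ae_iff.mp (h.mono fun x hx => by simpa using hx)⟩

end Support

section SignFlip

variable {n : ℕ}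

lemma measurable_signFlip (ε : Fin n → Bool) : Measurable (signFlip (n := n) ε) := by
  refine (EuclideanSpace.equiv (Fin n) ℝ).symm.continuous.measurable.comp
    (measurable_pi_lambda _ fun i => ?_)
  cases ε i <;> simp only [Bool.false_eq_true, if_true, if_false] <;> fun_prop

lemma norm_signFlip (ε : Fin n → Bool) (x : En n) : ‖signFlip ε x‖ = ‖x‖ := by
  simp only [EuclideanSpace.norm_eq]
  congr 1
  refine Finset.sum_congr rfl fun i _ => ?_
  by_cases hε : ε i <;> simp [signFlip, hε]

end SignFlip

section Variational

variable {n : ℕ} {m : Measure (En n)} {φ : En n → EReal}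

lemma log_intExpNeg_eq_iSup [IsFiniteMeasureOnCompacts m]
    (hm : ∃ β : ℝ, 0 < β ∧ ∫⁻ x, ENNReal.ofReal (Real.exp (-β * ‖x‖)) ∂m ≠ ⊤)
    (hφ : Measurable φ) (hφ_bot : ∀ x, φ x ≠ ⊥) (P : Measure (En n) → Prop)
    (hP : ∀ ν, P ν → MemP1 ν)
    (hP_gibbs : ∀ R : ℕ, gibbsMeasure m φ (cutoff φ R) ≠ 0 →
      P ((gibbsMeasure m φ)[|cutoff φ R])) :
    ENNReal.log (intExpNeg m φ) =
      ⨆ (ν : Measure (En n)) (_ : P ν), eInt ν (fun x => -φ x) - relEnt ν m := by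
  refine le_antisymm ?_
    (iSup₂_le fun ν hν => eInt_neg_sub_relEnt_le_log_intExpNeg hm hφ hφ_bot (hP ν hν))
  rw [← iSup_gibbsMeasure_cutoff hφ hφ_bot, ← ENNReal.logOrderIso_apply, OrderIso.map_iSup]
  refine iSup_le fun R => ?_
  by_cases h0 : gibbsMeasure m φ (cutoff φ R) = 0
  · simp [h0]
  rw [ENNReal.logOrderIso_apply, ← eInt_neg_sub_relEnt_cond_gibbsMeasure hφ
    (measurableSet_cutoff hφ R) (fun x hx => hx.2) h0 (gibbsMeasure_cutoff_ne_top hφ R)]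
  exact le_iSup₂ (f := fun ν (_ : P ν) => eInt ν (fun x => -φ x) - relEnt ν m) _ (hP_gibbs R h0)

end Variational

/-- Under the integrability assumption `∫ e^{-β|x|} dm < ∞`, for any
`φ ∈ F(ℝⁿ)` one has `log ∫ e^{-φ} dm = sup_{ν ∈ P₁} {∫(-φ) dν − H(ν|m)}`, the supremum can
be restricted to compactly supported `ν`, and if `φ` and `m` are symmetric
(resp. unconditional) it can further be restricted to compactly supported symmetric
(resp. unconditional) `ν`. -/
theorem statement9 (n : ℕ) (m : Measure (En n)) [IsFiniteMeasureOnCompacts m]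
    (hint : ∃ β : ℝ, 0 < β ∧ ∫⁻ x, ENNReal.ofReal (Real.exp (-β * ‖x‖)) ∂m ≠ ⊤)
    (φ : En n → EReal) (hφ : IsF φ) :
    elog (intExpNeg m φ) =
      (⨆ (ν : Measure (En n)) (_ : MemP1 ν), (eInt ν (fun x => -φ x) - relEnt ν m)) ∧
    elog (intExpNeg m φ) =
      (⨆ (ν : Measure (En n)) (_ : MemP1 ν ∧ HasCompactSupportMeasure ν),
        (eInt ν (fun x => -φ x) - relEnt ν m)) ∧
    (SymmFun φ → SymmMeas m →
      elog (intExpNeg m φ) =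
        (⨆ (ν : Measure (En n)) (_ : MemP1 ν ∧ HasCompactSupportMeasure ν ∧ SymmMeas ν),
          (eInt ν (fun x => -φ x) - relEnt ν m))) ∧
    (UncondFun φ → UncondMeas m →
      elog (intExpNeg m φ) =
        (⨆ (ν : Measure (En n)) (_ : MemP1 ν ∧ HasCompactSupportMeasure ν ∧ UncondMeas ν),
          (eInt ν (fun x => -φ x) - relEnt ν m))) := by
  have hφm : Measurable φ := hφ.1.measurable
  have key := log_intExpNeg_eq_iSup hint hφm hφ.2.2.2
  have hgibbs (R : ℕ) (h0 : gibbsMeasure m φ (cutoff φ R) ≠ 0) :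
      MemP1 ((gibbsMeasure m φ)[|cutoff φ R]) ∧
        HasCompactSupportMeasure ((gibbsMeasure m φ)[|cutoff φ R]) := by
    have := cond_isProbabilityMeasure_of_finite h0 (gibbsMeasure_cutoff_ne_top hφm R)
    have hnorm : ∀ᵐ x ∂(gibbsMeasure m φ)[|cutoff φ R], ‖x‖ ≤ R :=
      (ae_cond_mem (measurableSet_cutoff hφm R)).mono fun x hx => hx.1
    exact ⟨memP1_of_ae_norm_le hnorm, hasCompactSupportMeasure_of_ae_norm_le hnorm⟩
  rw [elog_eq_log]
  refine ⟨key _ (fun _ h => h) fun R h0 => (hgibbs R h0).1, key _ (fun _ h => h.1) hgibbs,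
    fun hφs hms => key _ (fun _ h => h.1) fun R h0 => ⟨(hgibbs R h0).1, (hgibbs R h0).2,
      map_cond_gibbsMeasure_cutoff hφm measurable_neg hms norm_neg hφs R⟩,
    fun hφu hmu => key _ (fun _ h => h.1) fun R h0 => ⟨(hgibbs R h0).1, (hgibbs R h0).2,
      fun ε => map_cond_gibbsMeasure_cutoff hφm (measurable_signFlip ε) (hmu ε)
        (norm_signFlip ε) (hφu ε) R⟩⟩
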